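/- arXiv:0801.2205 — 2 statements merged into one kernel-verified Lean document; each statement's English description precedes it below -/
import Mathlib

section
/- Let M be a module over the twisted Schrödinger–Virasoro Lie algebra and let v ∈ M satisfy L_1·v = 0, Y_1·v = 0, M_1·v = 0. Then Y_k·(L_2·v) = 0 and M_k·(L_2·v) = 0 for all integers k ≥ 1. -/
/-! Since `⁅L 1, Y k⁆ = (k - 1/2) • Y (k + 1)` and `⁅L 1, M k⁆ = k • M (k + 1)` have nonzero
coefficients for `k ≥ 1`, the annihilator of `v` (a Lie subalgebra) contains all `Y k` and `M k`
with `k ≥ 1`. Then `⁅X, ⁅L 2, v⁆⁆ = ⁅⁅X, L 2⁆, v⁆ + ⁅L 2, ⁅X, v⁆⁆` vanishes for `X = Y k, M k`,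
because `⁅Y k, L 2⁆` and `⁅M k, L 2⁆` are multiples of `Y (k + 2)` and `M (k + 2)`. -/

/-- The twisted Schrödinger–Virasoro Lie algebra: a complex Lie algebra with
basis `{L n, Y m, M p : n m p ∈ ℤ}` and the defining bracket relations. -/
structure TSV (𝓛 : Type*) [LieRing 𝓛] [LieAlgebra ℂ 𝓛] where
  L : ℤ → 𝓛
  Y : ℤ → 𝓛
  M : ℤ → 𝓛
  hLL : ∀ n p : ℤ, ⁅L n, L p⁆ = ((p : ℂ) - n) • L (n + p)
  hLY : ∀ n m : ℤ, ⁅L n, Y m⁆ = ((m : ℂ) - n / 2) • Y (n + m)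
  hLM : ∀ n p : ℤ, ⁅L n, M p⁆ = (p : ℂ) • M (n + p)
  hYY : ∀ m m' : ℤ, ⁅Y m, Y m'⁆ = ((m' : ℂ) - m) • M (m + m')
  hYM : ∀ m p : ℤ, ⁅Y m, M p⁆ = 0
  hMM : ∀ n p : ℤ, ⁅M n, M p⁆ = 0
  indep : LinearIndependent ℂ (Sum.elim L (Sum.elim Y M))
  span_top : Submodule.span ℂ (Set.range L ∪ Set.range Y ∪ Set.range M) = ⊤

section Annihilator

variable {L M : Type*} [LieRing L] [AddCommGroup M] [LieRingModule L M]

theorem lie_lie_eq_zero_of_lie_eq_zero {x y : L} {m : M} (hx : ⁅x, m⁆ = 0) (hy : ⁅y, m⁆ = 0) :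
    ⁅⁅x, y⁆, m⁆ = 0 := by
  rw [lie_lie, hx, hy, lie_zero, lie_zero, sub_zero]

theorem lie_lie_eq_zero_of_lie_eq_zero_of_bracket {x y : L} {m : M} (hx : ⁅x, m⁆ = 0)
    (hxy : ⁅⁅x, y⁆, m⁆ = 0) : ⁅x, ⁅y, m⁆⁆ = 0 := by
  rw [leibniz_lie, hxy, hx, lie_zero, add_zero]

variable {R : Type*} [CommRing R] [LieAlgebra R L] [Module R M] [LieModule R L M]
  [IsDomain R] [Module.IsTorsionFree R M]

theorem lie_eq_zero_of_raising {x : L} {X : ℤ → L} {c : ℤ → R}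
    (hX : ∀ k, ⁅x, X k⁆ = c k • X (1 + k)) (hc : ∀ k, 1 ≤ k → c k ≠ 0) {m : M}
    (hx : ⁅x, m⁆ = 0) (h1 : ⁅X 1, m⁆ = 0) {k : ℤ} (hk : 1 ≤ k) : ⁅X k, m⁆ = 0 := by
  induction k, hk using Int.leInduction with
  | base => exact h1
  | succ k hk ih =>
    have hraise := lie_lie_eq_zero_of_lie_eq_zero hx ih
    rw [hX, smul_lie] at hraise
    rw [add_comm]
    exact (smul_eq_zero_iff_right (hc k hk)).mp hraise

end Annihilator

theorem Int.cast_sub_half_ne_zero {K : Type*} [Field K] [CharZero K] (k : ℤ) :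
    (k : K) - ((1 : ℤ) : K) / 2 ≠ 0 := by
  intro h
  have h2 : ((2 * k : ℤ) : K) = ((1 : ℤ) : K) := by
    push_cast
    linear_combination 2 * h
  have := Int.cast_injective (α := K) h2
  omega

namespace TSV

variable {𝓛 V : Type*} [LieRing 𝓛] [LieAlgebra ℂ 𝓛] [AddCommGroup V] [Module ℂ V]
  [LieRingModule 𝓛 V] [LieModule ℂ 𝓛 V] (S : TSV 𝓛) {v : V}

theorem Y_lie_eq_zero (hL : ⁅S.L 1, v⁆ = 0) (hY : ⁅S.Y 1, v⁆ = 0) {k : ℤ} (hk : 1 ≤ k) :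
    ⁅S.Y k, v⁆ = 0 :=
  lie_eq_zero_of_raising (S.hLY 1) (fun k _ ↦ Int.cast_sub_half_ne_zero k) hL hY hk

theorem M_lie_eq_zero (hL : ⁅S.L 1, v⁆ = 0) (hM : ⁅S.M 1, v⁆ = 0) {k : ℤ} (hk : 1 ≤ k) :
    ⁅S.M k, v⁆ = 0 :=
  lie_eq_zero_of_raising (S.hLM 1) (fun k hk ↦ Int.cast_ne_zero.mpr (by omega)) hL hM hk

end TSV

/-- If `v` is annihilated by `L 1`, `Y 1` and `M 1`, then `L 2 • v` is
annihilated by `Y k` and `M k` for all `k ≥ 1`. -/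
theorem Y_M_annihilate_L2v (𝓛 V : Type*) [LieRing 𝓛] [LieAlgebra ℂ 𝓛]
    [AddCommGroup V] [Module ℂ V] [LieRingModule 𝓛 V] [LieModule ℂ 𝓛 V]
    (S : TSV 𝓛) (v : V) (hL : ⁅S.L 1, v⁆ = 0) (hY : ⁅S.Y 1, v⁆ = 0)
    (hM : ⁅S.M 1, v⁆ = 0) :
    ∀ k : ℤ, 1 ≤ k → ⁅S.Y k, ⁅S.L 2, v⁆⁆ = 0 ∧ ⁅S.M k, ⁅S.L 2, v⁆⁆ = 0 := by
  intro k hk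
  constructor
  · refine lie_lie_eq_zero_of_lie_eq_zero_of_bracket (S.Y_lie_eq_zero hL hY hk) ?_
    rw [← lie_skew, S.hLY, neg_lie, smul_lie, S.Y_lie_eq_zero hL hY (by omega), smul_zero,
      neg_zero]
  · refine lie_lie_eq_zero_of_lie_eq_zero_of_bracket (S.M_lie_eq_zero hL hM hk) ?_
    rw [← lie_skew, S.hLM, neg_lie, smul_lie, S.M_lie_eq_zero hL hM (by omega), smul_zero,
      neg_zero]
end

section
/- Let M be a module over the Witt algebra and let v ∈ M satisfy L_1·v = 0. Then (L_1³ − 6·L_2·L_1 + 6·L_3)·(L_2·v) = 0, where the expression is interpreted via the module action (i.e., L_1·L_1·L_1·L_2·v − 6·L_2·L_1·L_2·v + 6·L_3·L_2·v = 0). -/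
/-- The Witt algebra (centerless Virasoro): basis `{d n : n ∈ ℤ}` with
`[d n, d p] = (p - n) d (n+p)`. -/
structure WittAlg (W : Type*) [LieRing W] [LieAlgebra ℂ W] where
  d : ℤ → W
  hdd : ∀ n p : ℤ, ⁅d n, d p⁆ = ((p : ℂ) - n) • d (n + p)
  indep : LinearIndependent ℂ d
  span_top : Submodule.span ℂ (Set.range d) = ⊤

/-- Mazorchuk–Zhao, Lemma 4: if `L 1 • v = 0` in a Witt-algebra module, then
`(L 1 ^ 3 - 6 L 2 L 1 + 6 L 3) (L 2 v) = 0`. -/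
theorem mazorchuk_zhao_lemma4 (W V : Type*) [LieRing W] [LieAlgebra ℂ W]
    [AddCommGroup V] [Module ℂ V] [LieRingModule W V] [LieModule ℂ W V]
    (Wst : WittAlg W) (v : V) (h : ⁅Wst.d 1, v⁆ = 0) :
    ⁅Wst.d 1, ⁅Wst.d 1, ⁅Wst.d 1, ⁅Wst.d 2, v⁆⁆⁆⁆
      - (6 : ℂ) • ⁅Wst.d 2, ⁅Wst.d 1, ⁅Wst.d 2, v⁆⁆⁆
      + (6 : ℂ) • ⁅Wst.d 3, ⁅Wst.d 2, v⁆⁆ = 0 := by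
  have h12 : ⁅Wst.d 1, ⁅Wst.d 2, v⁆⁆ = ⁅Wst.d 3, v⁆ := by
    rw [leibniz_lie, h, lie_zero, add_zero, Wst.hdd]
    norm_num
  have h13 : ⁅Wst.d 1, ⁅Wst.d 3, v⁆⁆ = (2 : ℂ) • ⁅Wst.d 4, v⁆ := by
    rw [leibniz_lie, h, lie_zero, add_zero, Wst.hdd]
    norm_num [smul_lie]
  have h14 : ⁅Wst.d 1, ⁅Wst.d 4, v⁆⁆ = (3 : ℂ) • ⁅Wst.d 5, v⁆ := by
    rw [leibniz_lie, h, lie_zero, add_zero, Wst.hdd]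
    norm_num [smul_lie]
  have h23 : ⁅Wst.d 2, ⁅Wst.d 3, v⁆⁆ = ⁅Wst.d 5, v⁆ + ⁅Wst.d 3, ⁅Wst.d 2, v⁆⁆ := by
    rw [leibniz_lie, Wst.hdd]
    norm_num [smul_lie]
  rw [h12, h13, lie_smul, h14, h23, smul_add, smul_smul]
  norm_num
end
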